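/- arXiv:math/0101188 — 2 statements merged into one kernel-verified Lean document; each statement's English description precedes it below -/
import Mathlib

section
/- For real ν and x > 0, the derivative of ρ_(ν+1) satisfies ρ_(ν+1)'(x) = -ρ_ν(x), where ρ_ν(x) = ∫₀^∞ t^(ν-1) e^(-t - x/t) dt. -/
/-!
Differentiate under the integral sign. The `y`-derivative of `t ^ s * exp (-t - y / t)` is
`-t ^ (s - 1) * exp (-t - y / t)`, and for `y > x / 2` it is dominated by its value at `y = x / 2`.
All these integrands are integrable on `(0, ∞)`: the bound `exp (-c / t) ≤ n! (t / c) ^ n` tames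
the singularity of `t ^ s` at `0` and leaves a convergent Gamma integrand.
-/

open MeasureTheory Real Set

noncomputable def rho (ν x : ℝ) : ℝ :=
  ∫ t in Set.Ioi (0:ℝ), t ^ (ν - 1) * Real.exp (-t - x / t)

noncomputable def K (ν z : ℝ) : ℝ :=
  (1/2) * (z/2) ^ ν * ∫ t in Set.Ioi (0:ℝ), Real.exp (-t - z^2 / (4*t)) * t ^ (-ν - 1)

lemma exp_neg_le_factorial_div_pow {y : ℝ} (hy : 0 < y) (n : ℕ) :
    exp (-y) ≤ n.factorial / y ^ n := by
  rw [exp_neg, inv_le_comm₀ (exp_pos y) (by positivity), inv_div]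
  exact pow_div_factorial_le_exp _ hy.le n

lemma rpow_mul_exp_neg_sub_div_le {s c t : ℝ} (hc : 0 < c) (ht : 0 < t) (n : ℕ) :
    t ^ s * exp (-t - c / t) ≤ n.factorial / c ^ n * (exp (-t) * t ^ (s + n)) := by
  have hdecay : exp (-(c / t)) ≤ n.factorial / c ^ n * t ^ n := by
    refine (exp_neg_le_factorial_div_pow (div_pos hc ht) n).trans_eq ?_
    rw [div_pow]
    field_simp
  calc t ^ s * exp (-t - c / t) = exp (-t) * t ^ s * exp (-(c / t)) := by
        rw [sub_eq_add_neg, exp_add]; ring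
    _ ≤ exp (-t) * t ^ s * (n.factorial / c ^ n * t ^ n) := by gcongr
    _ = n.factorial / c ^ n * (exp (-t) * t ^ (s + n)) := by
        rw [rpow_add_natCast ht.ne']; ring

lemma integrableOn_rpow_mul_exp_neg_sub_div (s : ℝ) {c : ℝ} (hc : 0 < c) :
    IntegrableOn (fun t => t ^ s * exp (-t - c / t)) (Ioi 0) := by
  obtain ⟨n, hn⟩ := exists_nat_gt (-s)
  have hdom : IntegrableOn (fun t => n.factorial / c ^ n * (exp (-t) * t ^ (s + n))) (Ioi 0) := by
    have := GammaIntegral_convergent (s := s + n + 1) (by linarith)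
    simp only [add_sub_cancel_right] at this
    exact this.const_mul _
  refine hdom.mono' (by fun_prop) ?_
  filter_upwards [self_mem_ae_restrict measurableSet_Ioi] with t (ht : 0 < t)
  rw [norm_of_nonneg (by positivity)]
  exact rpow_mul_exp_neg_sub_div_le hc ht n

lemma hasDerivAt_rpow_mul_exp_neg_sub_div (s : ℝ) {t : ℝ} (ht : 0 < t) (y : ℝ) :
    HasDerivAt (fun y => t ^ s * exp (-t - y / t)) (-(t ^ (s - 1) * exp (-t - y / t))) y := by
  have hD := ((((hasDerivAt_id' y).div_const t).const_sub (-t)).exp).const_mul (t ^ s)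
  refine hD.congr_deriv ?_
  rw [rpow_sub_one ht.ne']
  field_simp

lemma hasDerivAt_integral_rpow_mul_exp_neg_sub_div (s : ℝ) {x : ℝ} (hx : 0 < x) :
    HasDerivAt (fun y => ∫ t in Ioi 0, t ^ s * exp (-t - y / t))
      (-∫ t in Ioi 0, t ^ (s - 1) * exp (-t - x / t)) x := by
  rw [← integral_neg]
  refine (hasDerivAt_integral_of_dominated_loc_of_deriv_le (μ := volume.restrict (Ioi 0))
    (F := fun y t => t ^ s * exp (-t - y / t)) (F' := fun y t => -(t ^ (s - 1) * exp (-t - y / t)))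
    (bound := fun t => t ^ (s - 1) * exp (-t - (x / 2) / t))
    (Ioi_mem_nhds (half_lt_self hx)) (.of_forall fun y => by fun_prop)
    (integrableOn_rpow_mul_exp_neg_sub_div s hx) (by fun_prop) ?_
    (integrableOn_rpow_mul_exp_neg_sub_div (s - 1) (half_pos hx)) ?_).2
  all_goals filter_upwards [self_mem_ae_restrict measurableSet_Ioi] with t (ht : 0 < t) y hy
  · rw [norm_neg, norm_of_nonneg (by positivity)]
    gcongr
    exact hy.le
  · exact hasDerivAt_rpow_mul_exp_neg_sub_div s ht y

theorem rho_succ_deriv (ν x : ℝ) (hx : 0 < x) :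
    HasDerivAt (fun y => rho (ν + 1) y) (-(rho ν x)) x := by
  simpa only [rho, add_sub_cancel_right] using hasDerivAt_integral_rpow_mul_exp_neg_sub_div ν hx
end

section
/- Let ν ≥ 0 and α > -1, and let p(x) = x² - 2(2+α)(2+α+ν) x + (1+α)(2+α)(1+α+ν)(2+α+ν). Then ∫₀^∞ p(x) x^α ρ_ν(x) dx = 0 and ∫₀^∞ p(x) x^α ρ_(ν+1)(x) dx = 0; i.e., p is the monic type-2 multiple orthogonal polynomial p_{1,1}^α for the weights (x^α ρ_ν, x^α ρ_(ν+1)). -/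
/-!
Swapping the two integrals (Tonelli--Fubini) in `∫ x^s ρ_ν(x) dx`, the inner integral over `x` is
a Gamma integral in `x / t` equal to `Γ(s+1) t^(s+1)`, so the moment is
`Γ(s+1) ∫ t^(s+ν) e^(-t) dt = Γ(s+1) Γ(s+ν+1)`. Hence the moments `m(s)` of `ρ_ν` satisfy
`m(s+1) = (s+1)(s+ν+1) m(s)`, and each orthogonality integral is `m(α)` times a polynomial in
`α`, `ν` that vanishes identically.
-/

open MeasureTheory Real Set

section MomentsOfRho

variable {ν s : ℝ}

lemma exp_neg_sub_div (x t : ℝ) : exp (-t - x / t) = exp (-t) * exp (-(t⁻¹ * x)) := by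
  rw [← exp_add, div_eq_inv_mul, sub_eq_add_neg]

lemma integrableOn_rpow_mul_rho_integrand (hs : -1 < s) {t : ℝ} (ht : 0 < t) :
    IntegrableOn (fun x => x ^ s * (t ^ (ν - 1) * exp (-t - x / t))) (Ioi 0) := by
  have h := (integrableOn_rpow_mul_exp_neg_mul_rpow hs one_pos
    (inv_pos.2 ht)).const_mul (t ^ (ν - 1) * exp (-t))
  refine IntegrableOn.congr_fun h (fun x _ => ?_) measurableSet_Ioi
  simp only [exp_neg_sub_div, rpow_one, neg_mul]
  ring

lemma integral_rpow_mul_rho_integrand (hs : -1 < s) {t : ℝ} (ht : 0 < t) :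
    ∫ x in Ioi 0, x ^ s * (t ^ (ν - 1) * exp (-t - x / t))
      = Gamma (s + 1) * (t ^ (s + ν) * exp (-t)) := by
  have h := integral_rpow_mul_exp_neg_mul_Ioi (by linarith : 0 < s + 1) (inv_pos.2 ht)
  rw [add_sub_cancel_right, one_div, inv_inv] at h
  have hfactor : (fun x => x ^ s * (t ^ (ν - 1) * exp (-t - x / t)))
      = fun x => t ^ (ν - 1) * exp (-t) * (x ^ s * exp (-(t⁻¹ * x))) := by
    funext x; rw [exp_neg_sub_div]; ring
  rw [hfactor, integral_const_mul, h, show t ^ (s + ν) = t ^ (ν - 1) * t ^ (s + 1) by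
    rw [← rpow_add ht]; ring_nf]
  ring

lemma integrable_rpow_mul_rho_integrand (hs : -1 < s) (hsν : -1 < s + ν) :
    Integrable (Function.uncurry fun x t => x ^ s * (t ^ (ν - 1) * exp (-t - x / t)))
      ((volume.restrict (Ioi 0)).prod (volume.restrict (Ioi 0))) := by
  refine (integrable_prod_iff' (by fun_prop)).2 ⟨?_, ?_⟩
  · filter_upwards [ae_restrict_mem measurableSet_Ioi] with t ht
    exact integrableOn_rpow_mul_rho_integrand hs ht
  · have hΓ : IntegrableOn (fun t => Gamma (s + 1) * (t ^ (s + ν) * exp (-t))) (Ioi 0) := by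
      have h := (integrableOn_rpow_mul_exp_neg_rpow hsν one_pos).const_mul (Gamma (s + 1))
      simpa only [IntegrableOn, rpow_one] using h
    refine hΓ.congr_fun (fun t ht => ?_) measurableSet_Ioi
    dsimp only [Function.uncurry_apply_pair]
    rw [← integral_rpow_mul_rho_integrand hs ht]
    refine setIntegral_congr_fun measurableSet_Ioi (fun x hx => ?_)
    have hx₀ : 0 < x := hx
    have ht₀ : 0 < t := ht
    exact (norm_of_nonneg (by positivity)).symm

theorem integrableOn_rpow_mul_rho (hs : -1 < s) (hsν : -1 < s + ν) :
    IntegrableOn (fun x => x ^ s * rho ν x) (Ioi 0) := by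
  have h := (integrable_rpow_mul_rho_integrand hs hsν).integral_prod_left
  simpa only [IntegrableOn, rho, Function.uncurry_apply_pair, integral_const_mul] using h

theorem integral_rpow_mul_rho (hs : -1 < s) (hsν : -1 < s + ν) :
    ∫ x in Ioi 0, x ^ s * rho ν x = Gamma (s + 1) * Gamma (s + ν + 1) := by
  have h := integral_integral_swap (integrable_rpow_mul_rho_integrand hs hsν)
  simp only [integral_const_mul] at h
  simp only [rho]
  rw [h, setIntegral_congr_fun measurableSet_Ioi
    (fun t ht => integral_rpow_mul_rho_integrand hs ht), integral_const_mul,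
    Gamma_eq_integral (s := s + ν + 1) (by linarith), add_sub_cancel_right]
  simp_rw [mul_comm (exp _)]

theorem integral_rpow_add_one_mul_rho (hs : -1 < s) (hsν : -1 < s + ν) :
    ∫ x in Ioi 0, x ^ (s + 1) * rho ν x = (s + 1) * (s + ν + 1) * ∫ x in Ioi 0, x ^ s * rho ν x := by
  rw [integral_rpow_mul_rho (by linarith) (by linarith), integral_rpow_mul_rho hs hsν,
    show s + 1 + ν + 1 = s + ν + 1 + 1 by ring,
    Gamma_add_one (s := s + 1) (by linarith : 0 < s + 1).ne',
    Gamma_add_one (s := s + ν + 1) (by linarith : 0 < s + ν + 1).ne']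
  ring

theorem integral_quadratic_mul_rpow_mul_rho (b c : ℝ) (hs : -1 < s) (hsν : -1 < s + ν) :
    ∫ x in Ioi 0, (x ^ 2 - b * x + c) * x ^ s * rho ν x
      = ((s + 1) * (s + ν + 1) * ((s + 2) * (s + ν + 2)) - b * ((s + 1) * (s + ν + 1)) + c)
        * ∫ x in Ioi 0, x ^ s * rho ν x := by
  have hexpand : ∀ x ∈ Ioi (0 : ℝ), (x ^ 2 - b * x + c) * x ^ s * rho ν x
      = x ^ (s + 1 + 1) * rho ν x - b * (x ^ (s + 1) * rho ν x) + c * (x ^ s * rho ν x) := by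
    intro x hx
    rw [rpow_add_one hx.out.ne', rpow_add_one hx.out.ne']
    ring
  have h₀ := integrableOn_rpow_mul_rho hs hsν
  have h₁ := integrableOn_rpow_mul_rho (s := s + 1) (by linarith) (by linarith)
  have h₂ := integrableOn_rpow_mul_rho (s := s + 1 + 1) (by linarith) (by linarith)
  rw [setIntegral_congr_fun measurableSet_Ioi hexpand, integral_add, integral_sub h₂,
    integral_const_mul, integral_const_mul,
    integral_rpow_add_one_mul_rho (by linarith) (by linarith), integral_rpow_add_one_mul_rho hs hsν]
  · ring
  · exact h₁.const_mul b
  · exact h₂.sub (h₁.const_mul b)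
  · exact h₀.const_mul c

end MomentsOfRho

theorem type2_p11 (ν α : ℝ) (hν : 0 ≤ ν) (hα : -1 < α) :
    (∫ x in Set.Ioi (0:ℝ),
        (x ^ 2 - 2 * (2 + α) * (2 + α + ν) * x
          + (1 + α) * (2 + α) * (1 + α + ν) * (2 + α + ν)) * x ^ α * rho ν x = 0) ∧
    (∫ x in Set.Ioi (0:ℝ),
        (x ^ 2 - 2 * (2 + α) * (2 + α + ν) * x
          + (1 + α) * (2 + α) * (1 + α + ν) * (2 + α + ν)) * x ^ α * rho (ν + 1) x = 0) := by
  constructor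
  · rw [integral_quadratic_mul_rpow_mul_rho _ _ hα (by linarith)]
    ring
  · rw [integral_quadratic_mul_rpow_mul_rho _ _ hα (by linarith)]
    ring
end
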